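/- arXiv:1806.08816 — 6 statements merged into one kernel-verified Lean document; each statement's English description precedes it below -/
import Mathlib

section
/- Let α₁, …, α_R be real numbers, each strictly larger than 1, and let 𝒜 = {m·α_r : m a positive integer, r ∈ {1,…,R}}. Let (u_p)_{p≥1} be a sequence of positive real numbers such that u₁ ≥ 1, u_{p+1} ≥ u_p + 1 for all p ≥ 1, and u_p ∈ 𝒜 for every p ≥ 1. Then there exists a real number ε̄₀ > 0, depending only on α₁, …, α_R, such that u_p > (1 + ε̄₀)·p for all sufficiently large p. -/
/-!
The excess `v n - n` of a sequence with gaps `≥ 1` is nondecreasing; it suffices to find `L` and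
`δ > 0`, depending only on the `α r`, such that the excess grows by `δ` in every window of `L`
consecutive indices.

If all gaps of a window are `< 1 + δ`, the excess varies by at most `L δ` on it. Two terms of the
window that are multiples of the same irrational `α r` would then put `k * α r` within `L δ` of a
nonzero integer `d` with `|d| ≤ L`, which the choice of `δ` excludes. A term `m * α r` with
`α r = A r / Q` rational has `Q * v = m * A r ∈ ℤ`, and since `Q L δ < 1` all these integers lie on
a single line `w + Q t`. As no `A r` divides `Q`, there is a residue class of `t` modulo some `P`
on which no `A r` divides `w + Q t = g (a + b t)`, `g = gcd w Q`: the one on which `a + b t` is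
coprime to every `A r`. This class meets a window of length `P (R + 1)` in `R + 1`
terms of irrational type, two of which share the same `α r` by pigeonhole.
-/

open Filter Topology

theorem Int.exists_isCoprime_add_mul {a b : ℤ} (hab : IsCoprime a b) (hb : b ≠ 0) {N : ℤ}
    (hN : N ≠ 0) : ∃ t, IsCoprime (a + b * t) N := by
  obtain ⟨p, hpN, hp, hpa⟩ := Nat.forall_exists_prime_gt_and_zmodEq N.natAbs (a := a)
    (Int.natAbs_ne_zero.mpr hb) (by
      rw [Int.isCoprime_iff_nat_coprime, Int.natAbs_natCast]
      exact Int.isCoprime_iff_nat_coprime.mp hab)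
  obtain ⟨t, ht⟩ := Int.natAbs_dvd.mp hpa.symm.dvd
  have hpN' : ¬ p ∣ N.natAbs := fun h => (Nat.le_of_dvd (Int.natAbs_pos.mpr hN) h).not_gt hpN
  refine ⟨t, ?_⟩
  rw [show a + b * t = p by linarith, Int.isCoprime_iff_nat_coprime, Int.natAbs_natCast]
  exact (Nat.Prime.coprime_iff_not_dvd hp).mpr hpN'

theorem exists_modEq_forall_not_dvd_add_mul {ι : Type*} (s : Finset ι) (A : ι → ℤ) {Q : ℤ}
    (hQ : Q ≠ 0) (hA0 : ∀ i ∈ s, A i ≠ 0) (hA : ∀ i ∈ s, ¬ A i ∣ Q) :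
    ∃ P : ℕ, 0 < P ∧
      ∀ w : ℤ, ∃ τ < P, ∀ t : ℕ, t ≡ τ [MOD P] → ∀ i ∈ s, ¬ A i ∣ w + Q * t := by
  set N := ∏ i ∈ s, A i
  have hN : N ≠ 0 := Finset.prod_ne_zero_iff.mpr hA0
  have hP : (0 : ℤ) < N.natAbs := by omega
  refine ⟨N.natAbs, by omega, fun w => ?_⟩
  obtain ⟨g, a, b, -, hab, rfl, rfl⟩ := Int.exists_gcd_one' (Int.gcd_pos_of_ne_zero_right w hQ)
  have hb : b ≠ 0 := by rintro rfl; simp at hQ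
  obtain ⟨t₀, ht₀⟩ := Int.exists_isCoprime_add_mul (Int.isCoprime_iff_gcd_eq_one.mpr hab) hb hN
  have hτ := Int.emod_lt_of_pos t₀ hP
  have hτ' := Int.toNat_of_nonneg (Int.emod_nonneg t₀ hP.ne')
  refine ⟨(t₀ % N.natAbs).toNat, by omega, fun t ht i hi hdvd => hA i hi ?_⟩
  have hNt : N ∣ t - t₀ := by
    rw [← Int.natAbs_dvd]
    refine ((Int.natCast_modEq_iff.mpr ht).trans ?_).symm.dvd
    rw [hτ']
    exact Int.mod_modEq _ _
  have hAi : A i ∣ N := Finset.dvd_prod_of_mem A hi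
  obtain ⟨c, hc⟩ := hAi.trans hNt
  have hcop : IsCoprime (A i) (a + b * t) := by
    rw [show a + b * t = a + b * t₀ + A i * (b * c) by linear_combination b * hc]
    exact ((ht₀.of_isCoprime_of_dvd_right hAi).add_mul_left_left (b * c)).symm
  rw [show a * g + b * g * t = (a + b * t) * g by ring] at hdvd
  exact (hcop.dvd_of_dvd_mul_left hdvd).trans (dvd_mul_left _ _)

theorem exists_common_denominator {ι : Type*} [Fintype ι] (α : ι → ℝ) :
    ∃ Q : ℕ, 0 < Q ∧ ∃ A : ι → ℤ, ∀ i, ¬ Irrational (α i) → (A i : ℝ) = Q * α i := by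
  have hq : ∀ i, ∃ q : ℚ, ¬ Irrational (α i) → (q : ℝ) = α i := fun i => by
    by_cases h : Irrational (α i)
    · exact ⟨0, fun h' => absurd h h'⟩
    · obtain ⟨q, hq⟩ := not_not.mp h
      exact ⟨q, fun _ => hq⟩
  choose q hq using hq
  choose c hc using fun i => Finset.dvd_prod_of_mem (fun j => (q j).den) (Finset.mem_univ i)
  refine ⟨∏ i, (q i).den, Finset.prod_pos fun i _ => (q i).den_pos, fun i => c i * (q i).num,
    fun i hi => ?_⟩
  rw [← hq i hi, hc i, Int.cast_mul, ← Rat.cast_intCast (q i).num, ← Rat.mul_den_eq_num]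
  push_cast
  ring

theorem eventually_mul_lt_abs_sub {R : ℕ} (α : Fin R → ℝ) (L : ℕ) :
    ∀ᶠ δ in 𝓝 (0 : ℝ), ∀ r, ∀ k ∈ Finset.Icc (-L : ℤ) L, ∀ d ∈ Finset.Icc (-L : ℤ) L,
      k * α r ≠ d → L * δ < |k * α r - d| := by
  refine eventually_all.mpr fun r => (eventually_all_finset _).mpr fun k _ =>
    (eventually_all_finset _).mpr fun d _ => ?_
  by_cases h : k * α r = d
  · exact Eventually.of_forall fun _ h' => absurd h h'
  · have : Tendsto (fun δ : ℝ => L * δ) (𝓝 0) (𝓝 0) := by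
      simpa using (tendsto_id (x := 𝓝 (0 : ℝ))).const_mul (L : ℝ)
    filter_upwards [this.eventually_lt_const (abs_pos.mpr (sub_ne_zero.mpr h))] with δ hδ _
    exact hδ

theorem Irrational.lt_abs_intCast_mul_sub {a : ℝ} (ha : Irrational a) (ha1 : 1 ≤ a) {L : ℕ}
    {η : ℝ} (hη : η < 1)
    (hsep : ∀ k ∈ Finset.Icc (-L : ℤ) L, ∀ d ∈ Finset.Icc (-L : ℤ) L,
      k * a ≠ d → η < |k * a - d|)
    (k : ℤ) {d : ℤ} (hd0 : d ≠ 0) (hdL : |d| ≤ L) : η < |k * a - d| := by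
  by_contra! h
  have hkL : |k| ≤ L := by
    have hd : (|d| : ℝ) ≤ L := by exact_mod_cast hdL
    have : ((|k| : ℤ) : ℝ) < L + 1 := calc
      ((|k| : ℤ) : ℝ) ≤ |(k : ℝ)| * a := by
        rw [Int.cast_abs]
        exact le_mul_of_one_le_right (abs_nonneg _) ha1
      _ = |(k * a - d) + d| := by rw [sub_add_cancel, abs_mul, abs_of_pos (a := a) (by linarith)]
      _ ≤ |(k * a - d)| + |(d : ℝ)| := abs_add_le _ _
      _ < L + 1 := by linarith
    exact Int.lt_add_one_iff.mp (by exact_mod_cast this)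
  have hne : (k : ℝ) * a ≠ d := by
    rcases eq_or_ne k 0 with rfl | hk0
    · simpa [eq_comm] using hd0
    · exact (ha.intCast_mul hk0).ne_int d
  exact (hsep k (Finset.mem_Icc.mpr (abs_le.mp hkL)) d (Finset.mem_Icc.mpr (abs_le.mp hdL))
    hne).not_ge h

theorem sub_mem_Icc_of_gaps_lt {v : ℕ → ℝ} (hgap : ∀ n, v n + 1 ≤ v (n + 1)) {i L : ℕ} {δ : ℝ}
    (hδ : 0 ≤ δ) (hsmall : ∀ j, i ≤ j → j < i + L → v (j + 1) < v j + 1 + δ) {t : ℕ}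
    (ht : t ≤ L) : v (i + t) - t ∈ Set.Icc (v i) (v i + L * δ) := by
  suffices v i ≤ v (i + t) - t ∧ v (i + t) - t ≤ v i + t * δ from
    ⟨this.1, this.2.trans (by gcongr)⟩
  induction t with
  | zero => simp
  | succ t ih =>
    have h₁ := hgap (i + t)
    have h₂ := hsmall (i + t) (by omega) (by omega)
    obtain ⟨ih₁, ih₂⟩ := ih (by omega)
    push_cast
    rw [← add_assoc]
    constructor <;> linarith

theorem add_add_div_mul_le_of_window_gap {v : ℕ → ℝ} (hgap : ∀ n, v n + 1 ≤ v (n + 1)) {L : ℕ}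
    {δ : ℝ} (hwin : ∀ i, ∃ j, i ≤ j ∧ j < i + L ∧ v j + 1 + δ ≤ v (j + 1)) (n : ℕ) :
    v 0 + n + (n / L : ℕ) * δ ≤ v n := by
  set g : ℕ → ℝ := fun n => v n - n
  have hg : Monotone g := monotone_nat_of_le_succ fun n => by
    simp only [g]
    push_cast
    linarith [hgap n]
  have hstep : ∀ k : ℕ, g 0 + k * δ ≤ g (k * L) := by
    intro k
    induction k with
    | zero => simp
    | succ k ih =>
      obtain ⟨j, hj₁, hj₂, hj⟩ := hwin (k * L)
      have hjump : g j + δ ≤ g (j + 1) := by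
        simp only [g]
        push_cast
        linarith
      have := hg hj₁
      have := hg (show j + 1 ≤ (k + 1) * L by rw [add_mul, one_mul]; omega)
      push_cast
      linarith
  have := (hstep (n / L)).trans (hg (Nat.div_mul_le_self n L))
  simp only [g] at this
  push_cast at this
  linarith

theorem Int.exists_forall_eq_of_abs_sub_lt_one {ι : Type*} {p : ι → Prop} (z : ι → ℤ)
    (h : ∀ s t, p s → p t → |(z t : ℝ) - z s| < 1) : ∃ w, ∀ t, p t → z t = w := by
  by_cases hp : ∃ s, p s
  · obtain ⟨s, hs⟩ := hp
    refine ⟨z s, fun t ht => sub_eq_zero.mp (Int.abs_lt_one_iff.mp ?_)⟩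
    exact_mod_cast h s t hs ht
  · exact ⟨0, fun t ht => absurd ⟨t, ht⟩ hp⟩

theorem exists_excess_spread {R : ℕ} {α : Fin R → ℝ} (hα : ∀ r, 1 < α r)
    {Q : ℕ} (hQ : 0 < Q) {A : Fin R → ℤ} (hA : ∀ r, ¬ Irrational (α r) → (A r : ℝ) = Q * α r)
    {P : ℕ} (hP : ∀ w : ℤ, ∃ τ < P, ∀ t : ℕ, t ≡ τ [MOD P] →
      ∀ r, ¬ Irrational (α r) → ¬ A r ∣ w + Q * t)
    {L : ℕ} (hL : P * (R + 1) ≤ L) {δ : ℝ} (hδ : 0 ≤ δ) (hQδ : Q * (L * δ) < 1)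
    (hsep : ∀ r, ∀ k ∈ Finset.Icc (-L : ℤ) L, ∀ d ∈ Finset.Icc (-L : ℤ) L,
      k * α r ≠ d → L * δ < |k * α r - d|)
    {v : ℕ → ℝ} (hmem : ∀ n, ∃ (m : ℕ) (r : Fin R), v n = m * α r) :
    ∃ s ≤ L, ∃ t ≤ L, L * δ < |(v t - t) - (v s - s)| := by
  by_contra! hclose
  choose m r hmr using hmem
  have hLδ : L * δ < 1 :=
    (le_mul_of_one_le_left (by positivity) (by exact_mod_cast hQ)).trans_lt hQδ
  have hcast : ∀ t, ¬ Irrational (α (r t)) →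
      (((m t : ℤ) * A (r t) - Q * t : ℤ) : ℝ) = Q * (v t - t) := by
    intro t ht
    push_cast
    rw [hA _ ht, hmr]
    ring
  obtain ⟨w, hw⟩ := Int.exists_forall_eq_of_abs_sub_lt_one
    (p := fun t => t ≤ L ∧ ¬ Irrational (α (r t))) (fun t => m t * A (r t) - Q * t)
    fun s t ⟨hs, hrs⟩ ⟨ht, hrt⟩ => by
      rw [hcast t hrt, hcast s hrs, ← mul_sub, abs_mul, Nat.abs_cast]
      exact (mul_le_mul_of_nonneg_left (hclose s hs t ht) (Nat.cast_nonneg Q)).trans_lt hQδ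
  obtain ⟨τ, hτ, hτw⟩ := hP w
  set T : Fin (R + 1) → ℕ := fun j => τ + P * j
  have hTL : ∀ j, T j ≤ L := fun j => by
    have := Nat.mul_le_mul_left P (Nat.lt_succ_iff.mp j.isLt)
    simp only [T]
    nlinarith
  have hirr : ∀ j, Irrational (α (r (T j))) := by
    intro j
    by_contra hrat
    refine hτw (T j) (by simp [T, Nat.ModEq]) _ hrat ⟨m (T j), ?_⟩
    linear_combination -hw (T j) ⟨hTL j, hrat⟩
  obtain ⟨j, j', hjj', hr⟩ := Fintype.exists_ne_map_eq_of_card_lt (fun j => r (T j)) (by simp)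
  have hTT : T j ≠ T j' := fun h => hjj' (Fin.ext (by
    have hP0 : 0 < P := by omega
    simpa [T, hP0.ne'] using h))
  refine (Irrational.lt_abs_intCast_mul_sub (hirr j) (hα _).le hLδ (hsep _)
    (m (T j') - m (T j)) (d := T j' - T j) (by omega) ?_).not_ge ?_
  · have := hTL j
    have := hTL j'
    rw [abs_le]
    constructor <;> omega
  · refine Eq.trans_le ?_ (hclose (T j) (hTL j) (T j') (hTL j'))
    push_cast
    rw [hmr (T j), hmr (T j'), ← hr]
    congr 1
    ring

theorem exists_window_gap_of_constants {R : ℕ} {α : Fin R → ℝ} (hα : ∀ r, 1 < α r)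
    {Q : ℕ} (hQ : 0 < Q) {A : Fin R → ℤ} (hA : ∀ r, ¬ Irrational (α r) → (A r : ℝ) = Q * α r)
    {P : ℕ} (hP : ∀ w : ℤ, ∃ τ < P, ∀ t : ℕ, t ≡ τ [MOD P] →
      ∀ r, ¬ Irrational (α r) → ¬ A r ∣ w + Q * t)
    {L : ℕ} (hL : P * (R + 1) ≤ L) {δ : ℝ} (hδ : 0 ≤ δ) (hQδ : Q * (L * δ) < 1)
    (hsep : ∀ r, ∀ k ∈ Finset.Icc (-L : ℤ) L, ∀ d ∈ Finset.Icc (-L : ℤ) L,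
      k * α r ≠ d → L * δ < |k * α r - d|)
    {v : ℕ → ℝ} (hgap : ∀ n, v n + 1 ≤ v (n + 1))
    (hmem : ∀ n, ∃ (m : ℕ) (r : Fin R), v n = m * α r) (i : ℕ) :
    ∃ j, i ≤ j ∧ j < i + L ∧ v j + 1 + δ ≤ v (j + 1) := by
  by_contra! hsmall
  obtain ⟨s, hs, t, ht, hst⟩ :=
    exists_excess_spread hα hQ hA hP hL hδ hQδ hsep (v := fun t => v (i + t)) fun t => hmem (i + t)
  obtain ⟨hs₁, hs₂⟩ := sub_mem_Icc_of_gaps_lt hgap hδ hsmall hs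
  obtain ⟨ht₁, ht₂⟩ := sub_mem_Icc_of_gaps_lt hgap hδ hsmall ht
  exact hst.not_ge (abs_sub_le_iff.mpr ⟨by linarith, by linarith⟩)

theorem exists_window_gap {R : ℕ} {α : Fin R → ℝ} (hα : ∀ r, 1 < α r) :
    ∃ L : ℕ, 0 < L ∧ ∃ δ : ℝ, 0 < δ ∧ ∀ v : ℕ → ℝ, (∀ n, v n + 1 ≤ v (n + 1)) →
      (∀ n, ∃ (m : ℕ) (r : Fin R), v n = m * α r) →
      ∀ i, ∃ j, i ≤ j ∧ j < i + L ∧ v j + 1 + δ ≤ v (j + 1) := by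
  classical
  obtain ⟨Q, hQ, A, hA⟩ := exists_common_denominator α
  set s := Finset.univ.filter fun r => ¬ Irrational (α r)
  have hQA : ∀ r ∈ s, (Q : ℤ) < A r := fun r hr => by
    have hQα : (Q : ℝ) < Q * α r := lt_mul_of_one_lt_right (by exact_mod_cast hQ) (hα r)
    rw [← hA r (Finset.mem_filter.mp hr).2] at hQα
    exact_mod_cast hQα
  obtain ⟨P, hP, hPw⟩ := exists_modEq_forall_not_dvd_add_mul s A (Q := Q) (by omega)
    (fun r hr => by have := hQA r hr; omega)
    (fun r hr h => (Int.le_of_dvd (by omega) h).not_gt (hQA r hr))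
  set L := P * (R + 1)
  have hQLδ : Tendsto (fun δ : ℝ => Q * (L * δ)) (𝓝 0) (𝓝 0) := by
    simpa using ((tendsto_id (x := 𝓝 (0 : ℝ))).const_mul (L : ℝ)).const_mul (Q : ℝ)
  obtain ⟨δ, ⟨hsep, hQδ⟩, hδ⟩ := (((eventually_mul_lt_abs_sub α L).and
    (hQLδ.eventually_lt_const one_pos)).filter_mono nhdsWithin_le_nhds |>.and
    self_mem_nhdsWithin).exists (f := 𝓝[>] (0 : ℝ))
  refine ⟨L, by positivity, δ, hδ, fun v hgap hmem i => exists_window_gap_of_constants hα hQ hA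
    (fun w => ?_) le_rfl hδ.le hQδ hsep hgap hmem i⟩
  obtain ⟨τ, hτ, h⟩ := hPw w
  exact ⟨τ, hτ, fun t ht r hr => h t ht r (by simpa [s] using hr)⟩

/-- Arithmetic lemma: if `u` is a sequence of positive reals with `u 1 ≥ 1`,
gaps at least `1`, and each `u p` is a positive integer multiple of some `α r`
with all `α r > 1`, then there is `ε̄₀ > 0` (depending only on the `α r`) with
`u p > (1 + ε̄₀) * p` for all large `p`. -/
theorem stmt0 (R : ℕ) (α : Fin R → ℝ) (hα : ∀ r, 1 < α r) :
    ∃ ε : ℝ, 0 < ε ∧ ∀ u : ℕ → ℝ,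
      (∀ p, 1 ≤ p → 0 < u p) →
      1 ≤ u 1 →
      (∀ p, 1 ≤ p → u p + 1 ≤ u (p + 1)) →
      (∀ p, 1 ≤ p → ∃ (m : ℕ) (r : Fin R), 0 < m ∧ u p = m * α r) →
      ∀ᶠ p : ℕ in Filter.atTop, (1 + ε) * p < u p := by
  obtain ⟨L, hL, δ, hδ, hwin⟩ := exists_window_gap hα
  refine ⟨δ / (2 * L), by positivity, fun u _ hu₁ hgap hmem => ?_⟩
  have hvgap : ∀ n, u (n + 1) + 1 ≤ u (n + 1 + 1) := fun n => hgap (n + 1) (by omega)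
  have hvmem : ∀ n, ∃ (m : ℕ) (r : Fin R), u (n + 1) = m * α r := fun n => by
    obtain ⟨m, r, -, h⟩ := hmem (n + 1) (by omega)
    exact ⟨m, r, h⟩
  have hgrowth := add_add_div_mul_le_of_window_gap hvgap (hwin _ hvgap hvmem)
  rw [eventually_atTop]
  refine ⟨2 * L + 2, fun p hp => ?_⟩
  obtain ⟨n, rfl⟩ : ∃ n, p = n + 1 := ⟨p - 1, by omega⟩
  have hn : n + 1 < 2 * (n / L * L) := by
    have := Nat.lt_div_mul_add (a := n) hL
    generalize n / L * L = q at this ⊢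
    omega
  have hgain : δ / (2 * L) * (n + 1) < (n / L : ℕ) * δ := by
    have hn' : (n : ℝ) + 1 < 2 * ((n / L : ℕ) * L) := by exact_mod_cast hn
    rw [div_mul_eq_mul_div, div_lt_iff₀ (by positivity)]
    nlinarith
  have := hgrowth n
  push_cast at this ⊢
  linarith
end

section
/- Let α₁, …, α_R be real numbers, each strictly larger than 1, such that α₁⁻¹, …, α_S⁻¹ (for some S ≤ R) span over ℚ the same ℚ-vector space as α₁⁻¹, …, α_R⁻¹, and suppose that for each r ∈ {S+1,…,R} there are a nonzero integer c_r and integers c_{r,1}, …, c_{r,S} with c_r·α_r⁻¹ = Σ_{i=1}^{S} c_{r,i}·α_i⁻¹. Set M = Π_{r=S+1}^{R} |c_r| (with M = 1 if S = R). Then there exists a constant C > 0, depending only on α₁, …, α_R and the chosen integer relations, such that for every ε ∈ (0,1), every r ∈ {2,…,R}, and every natural number l satisfying: for each i ∈ {2,…,S} there is an integer q_i with |l·α₁/α_i − q_i| < ε/2, there exists an integer q' with |M·l·α₁ − q'·α_r| < C·ε. -/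
/-!
Every `α r⁻¹` satisfies an integer relation `a * α r⁻¹ = ∑ b i * α i⁻¹` over the first `S`
reciprocals with `a ∣ M`: the trivial one for `r < S`, the given one otherwise. Multiplied by
`x * α r`, with `x = l * α₁`, it reads `a * x = α r * ∑ b i * (x / α i)`. Each `x / α i` is within
`ε / 2` of an integer `q i` (exactly `l` for `i = 1`), so `M * x` is within
`M * |α r| * ∑ |b i| * ε / 2` of the integer multiple `(M / a) * ∑ b i * q i` of `α r`.
-/

theorem intCast_mul_sub_sum_mul_eq {ι K : Type*} [Fintype ι] [Field K] {x γ : K} {β : ι → K}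
    {a : ℤ} {b q : ι → ℤ} (hγ : γ ≠ 0) (hrel : a * γ⁻¹ = ∑ i, b i * (β i)⁻¹) :
    a * x - ((∑ i, b i * q i : ℤ) : K) * γ = γ * ∑ i, b i * (x / β i - q i) := by
  have hax : (a : K) * x = γ * x * (a * γ⁻¹) := by field_simp
  rw [hax, hrel, Finset.mul_sum, Finset.mul_sum, Int.cast_sum, Finset.sum_mul,
    ← Finset.sum_sub_distrib]
  refine Finset.sum_congr rfl fun i _ => ?_
  push_cast
  ring

theorem abs_intCast_mul_sub_sum_mul_le {ι K : Type*} [Fintype ι] [Field K] [LinearOrder K]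
    [IsStrictOrderedRing K] {x γ δ : K} {β : ι → K} {a : ℤ} {b q : ι → ℤ} (hγ : γ ≠ 0)
    (hrel : a * γ⁻¹ = ∑ i, b i * (β i)⁻¹) (hq : ∀ i, |x / β i - q i| ≤ δ) :
    |a * x - ((∑ i, b i * q i : ℤ) : K) * γ| ≤ |γ| * (∑ i, |(b i : K)|) * δ := by
  rw [intCast_mul_sub_sum_mul_eq hγ hrel, abs_mul, mul_assoc, Finset.sum_mul]
  gcongr
  refine (Finset.abs_sum_le_sum_abs _ _).trans (Finset.sum_le_sum fun i _ => ?_)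
  rw [abs_mul]
  gcongr
  exact hq i

theorem exists_abs_intCast_mul_sub_intCast_mul_le_of_dvd {ι K : Type*} [Fintype ι] [Field K]
    [LinearOrder K] [IsStrictOrderedRing K] {x γ δ : K} {β : ι → K} {a m : ℤ} {b q : ι → ℤ}
    (ha : a ≠ 0) (hdvd : a ∣ m) (hγ : γ ≠ 0) (hrel : a * γ⁻¹ = ∑ i, b i * (β i)⁻¹)
    (hq : ∀ i, |x / β i - q i| ≤ δ) :
    ∃ q' : ℤ, |m * x - q' * γ| ≤ |(m : K)| * (|γ| * (∑ i, |(b i : K)|) * δ) := by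
  obtain ⟨k, rfl⟩ := hdvd
  refine ⟨k * ∑ i, b i * q i, ?_⟩
  have hk : |(k : K)| ≤ |((a * k : ℤ) : K)| := by
    rw [← Int.cast_abs, ← Int.cast_abs, Int.cast_le, abs_mul]
    exact le_mul_of_one_le_left (abs_nonneg k) (Int.one_le_abs ha)
  calc |((a * k : ℤ) : K) * x - ((k * ∑ i, b i * q i : ℤ) : K) * γ|
      = |(k : K)| * |a * x - ((∑ i, b i * q i : ℤ) : K) * γ| := by
        rw [← abs_mul]; push_cast; ring_nf
    _ ≤ |((a * k : ℤ) : K)| * (|γ| * (∑ i, |(b i : K)|) * δ) :=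
        mul_le_mul hk (abs_intCast_mul_sub_sum_mul_le hγ hrel hq) (abs_nonneg _) (abs_nonneg _)

theorem exists_intCast_mul_inv_eq_sum {R S : ℕ} (hSR : S ≤ R) (α : Fin R → ℝ)
    (c : Fin R → ℤ) (cc : Fin R → Fin S → ℤ) (hc : ∀ r : Fin R, S ≤ (r : ℕ) → c r ≠ 0)
    (hrel : ∀ r : Fin R, S ≤ (r : ℕ) →
      (c r : ℝ) * (α r)⁻¹ = ∑ i, (cc r i : ℝ) * (α (Fin.castLE hSR i))⁻¹) (r : Fin R) :
    ∃ (a : ℤ) (b : Fin S → ℤ), a ≠ 0 ∧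
      a ∣ ∏ r' ∈ Finset.univ.filter (fun r' : Fin R => S ≤ (r' : ℕ)), |c r'| ∧
      (a : ℝ) * (α r)⁻¹ = ∑ i, (b i : ℝ) * (α (Fin.castLE hSR i))⁻¹ := by
  by_cases hrS : (r : ℕ) < S
  · refine ⟨1, fun i => if i = ⟨r, hrS⟩ then 1 else 0, one_ne_zero, one_dvd _, ?_⟩
    simp [apply_ite (Int.cast : ℤ → ℝ), Fin.castLE]
  · refine ⟨c r, cc r, hc r (not_lt.mp hrS), ?_, hrel r (not_lt.mp hrS)⟩
    exact (self_dvd_abs _).trans (Finset.dvd_prod_of_mem _ (by simpa using hrS))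

theorem stmt3_general (R S : ℕ) (hS : 0 < S) (hSR : S ≤ R)
    (α : Fin R → ℝ) (hα : ∀ r, 1 < α r)
    (c : Fin R → ℤ) (cc : Fin R → Fin S → ℤ)
    (hc : ∀ r : Fin R, S ≤ (r : ℕ) → c r ≠ 0)
    (hrel : ∀ r : Fin R, S ≤ (r : ℕ) →
      (c r : ℝ) * (α r)⁻¹ = ∑ i, (cc r i : ℝ) * (α (Fin.castLE hSR i))⁻¹) :
    ∃ C : ℝ, 0 < C ∧ ∀ ε : ℝ, 0 < ε → ε < 1 →
      ∀ r : Fin R, r ≠ ⟨0, hS.trans_le hSR⟩ →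
      ∀ l : ℕ,
        (∀ i : Fin S, i ≠ ⟨0, hS⟩ →
          ∃ q : ℤ, |(l : ℝ) * α ⟨0, hS.trans_le hSR⟩ / α (Fin.castLE hSR i) - q| < ε / 2) →
        ∃ q' : ℤ,
          |((∏ r' ∈ Finset.univ.filter (fun r' : Fin R => S ≤ (r' : ℕ)), |c r'| : ℤ) : ℝ)
              * (l : ℝ) * α ⟨0, hS.trans_le hSR⟩ - (q' : ℝ) * α r| < C * ε := by
  choose a b ha hdvd hab using exists_intCast_mul_inv_eq_sum hSR α c cc hc hrel
  set M : ℤ := ∏ r' ∈ Finset.univ.filter (fun r' : Fin R => S ≤ (r' : ℕ)), |c r'|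
  set T : ℝ := ∑ r, |α r| * ∑ i, |(b r i : ℝ)|
  have hα0 : ∀ r, α r ≠ 0 := fun r => (one_pos.trans (hα r)).ne'
  refine ⟨M * T + 1, by positivity, fun ε hε _ r _ l hl => ?_⟩
  have hq : ∀ i : Fin S, ∃ q : ℤ,
      |(l : ℝ) * α ⟨0, hS.trans_le hSR⟩ / α (Fin.castLE hSR i) - q| ≤ ε / 2 := by
    intro i
    by_cases hi : i = ⟨0, hS⟩
    · subst hi
      exact ⟨l, by simp [mul_div_assoc, div_self (hα0 _)]; positivity⟩
    · obtain ⟨q, hq⟩ := hl i hi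
      exact ⟨q, hq.le⟩
  choose q hq using hq
  obtain ⟨q', hq'⟩ :=
    exists_abs_intCast_mul_sub_intCast_mul_le_of_dvd (ha r) (hdvd r) (hα0 r) (hab r) hq
  refine ⟨q', ?_⟩
  have hT : |α r| * ∑ i, |(b r i : ℝ)| ≤ T :=
    Finset.single_le_sum (f := fun r => |α r| * ∑ i, |(b r i : ℝ)|)
      (fun _ _ => by positivity) (Finset.mem_univ r)
  have hM : (0 : ℝ) ≤ M := by positivity
  calc |(M : ℝ) * l * α ⟨0, hS.trans_le hSR⟩ - q' * α r|
      ≤ M * (|α r| * (∑ i, |(b r i : ℝ)|) * (ε / 2)) := by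
        simpa only [mul_assoc, abs_of_nonneg hM] using hq'
    _ ≤ M * (T * (ε / 2)) := by gcongr
    _ < (M * T + 1) * ε := by nlinarith [mul_nonneg hM (hT.trans' (by positivity))]

/-- Let `α r > 1` be reals (`r : Fin R`, `0`-based, `α₁ = α 0`), such that the
reciprocals of the first `S` of them span over `ℚ` the same `ℚ`-vector space as all
the reciprocals, with integer relations `c r * (α r)⁻¹ = ∑ i, cc r i * (α i)⁻¹`
(`c r ≠ 0`) for `r` with index `≥ S`. Let `M = ∏_{S ≤ r} |c r|`. Then there is
`C > 0` (depending only on the data) such that for every `ε ∈ (0,1)`, every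
`r ∈ {2, …, R}`, and every `l ∈ ℕ` with `l * α₁ / α i` within `ε/2` of an integer
for each `i ∈ {2, …, S}`, there is an integer `q'` with
`|M * l * α₁ - q' * α r| < C * ε`. -/
theorem stmt3 (R S : ℕ) (hS : 0 < S) (hSR : S ≤ R)
    (α : Fin R → ℝ) (hα : ∀ r, 1 < α r)
    (hspan : Submodule.span ℚ (Set.range fun i : Fin S => (α (Fin.castLE hSR i))⁻¹)
        = Submodule.span ℚ (Set.range fun r : Fin R => (α r)⁻¹))
    (c : Fin R → ℤ) (cc : Fin R → Fin S → ℤ)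
    (hc : ∀ r : Fin R, S ≤ (r : ℕ) → c r ≠ 0)
    (hrel : ∀ r : Fin R, S ≤ (r : ℕ) →
      (c r : ℝ) * (α r)⁻¹ = ∑ i, (cc r i : ℝ) * (α (Fin.castLE hSR i))⁻¹) :
    ∃ C : ℝ, 0 < C ∧ ∀ ε : ℝ, 0 < ε → ε < 1 →
      ∀ r : Fin R, r ≠ ⟨0, hS.trans_le hSR⟩ →
      ∀ l : ℕ,
        (∀ i : Fin S, i ≠ ⟨0, hS⟩ →
          ∃ q : ℤ, |(l : ℝ) * α ⟨0, hS.trans_le hSR⟩ / α (Fin.castLE hSR i) - q| < ε / 2) →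
        ∃ q' : ℤ,
          |((∏ r' ∈ Finset.univ.filter (fun r' : Fin R => S ≤ (r' : ℕ)), |c r'| : ℤ) : ℝ)
              * (l : ℝ) * α ⟨0, hS.trans_le hSR⟩ - (q' : ℝ) * α r| < C * ε :=
  stmt3_general R S hS hSR α hα c cc hc hrel
end

section
/- Let ε₁ > 0 and let α₁, …, α_R be real numbers with α_r > 1 + 3ε₁ for every r ∈ {1,…,R}. Let x be a real number such that for every r ∈ {1,…,R} there exists an integer q_r with |x − q_r·α_r| < ε₁. Then the closed interval [x + ε₁, x + 2ε₁ + 1] contains no element of 𝒜 = {m·α_r : m a positive integer, r ∈ {1,…,R}}. -/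
/-! `x` lies within `ε₁` of `q α`, so the window `[x + ε₁, x + 2ε₁ + 1]` sits strictly inside
`(q α, (q + 1) α)` because `α > 1 + 3ε₁`; no integer multiple of `α` fits there. -/

lemma not_intCast_mul_mem_Ioo_mul_succ {K : Type*} [Field K] [LinearOrder K]
    [IsStrictOrderedRing K] {α : K} (hα : 0 < α) (q m : ℤ) :
    (m : K) * α ∉ Set.Ioo ((q : K) * α) ((q + 1) * α) := by
  rintro ⟨hlo, hhi⟩
  have hqm : (q : K) < m := lt_of_mul_lt_mul_right hlo hα.le
  have hmq : (m : K) < q + 1 := lt_of_mul_lt_mul_right hhi hα.le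
  have : q < m := by exact_mod_cast hqm
  have : m < q + 1 := by exact_mod_cast hmq
  omega

lemma intCast_mul_notMem_Icc_of_abs_sub_lt {ε α x : ℝ} {q : ℤ} (hq : |x - q * α| < ε)
    (hα : 1 + 3 * ε < α) (m : ℤ) : (m : ℝ) * α ∉ Set.Icc (x + ε) (x + 2 * ε + 1) := by
  rintro ⟨hlo, hhi⟩
  obtain ⟨hq_lo, hq_hi⟩ := abs_lt.mp hq
  have hα₀ : 0 < α := by linarith
  exact not_intCast_mul_mem_Ioo_mul_succ hα₀ q m ⟨by linarith, by linarith⟩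

theorem stmt4_general (R : ℕ) (ε₁ : ℝ) (α : Fin R → ℝ)
    (hα : ∀ r, 1 + 3 * ε₁ < α r) (x : ℝ)
    (hx : ∀ r : Fin R, ∃ q : ℤ, |x - q * α r| < ε₁) :
    ∀ y ∈ Set.Icc (x + ε₁) (x + 2 * ε₁ + 1),
      ¬ ∃ (m : ℕ) (r : Fin R), 0 < m ∧ y = m * α r := by
  rintro y hy ⟨m, r, -, rfl⟩
  obtain ⟨q, hq⟩ := hx r
  exact intCast_mul_notMem_Icc_of_abs_sub_lt hq (hα r) m (by exact_mod_cast hy)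

/-- If `α r > 1 + 3 ε₁` for all `r` and `x` is within `ε₁` of an integer multiple of
each `α r`, then the interval `[x + ε₁, x + 2 ε₁ + 1]` contains no element of
`𝒜 = {m * α r : m positive integer}`. -/
theorem stmt4 (R : ℕ) (ε₁ : ℝ) (hε₁ : 0 < ε₁) (α : Fin R → ℝ)
    (hα : ∀ r, 1 + 3 * ε₁ < α r) (x : ℝ)
    (hx : ∀ r : Fin R, ∃ q : ℤ, |x - q * α r| < ε₁) :
    ∀ y ∈ Set.Icc (x + ε₁) (x + 2 * ε₁ + 1),
      ¬ ∃ (m : ℕ) (r : Fin R), 0 < m ∧ y = m * α r :=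
  stmt4_general R ε₁ α hα x hx
end

section
/- Let α₁, …, α_R be real numbers, each strictly larger than 1, and let 𝒜 = {m·α_r : m a positive integer, r ∈ {1,…,R}}. Then there exist ε₁ ∈ (0,1) and d > 0 such that for all sufficiently large P > 0 there exist at least d·P pairwise disjoint closed intervals, each of length 1 + ε₁, contained in [0, P] and each disjoint from 𝒜. -/
/-!
Let `φ : ℝ → ∏ r, ℝ ⧸ α r ℤ` be `t ↦ (t mod α r)_r`. The torus is compact, so the range of `φ`
has a finite `δ`-net `φ '' F`; approximating `-φ a` by some `φ s` with `s ∈ F` shows that the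
times `t` with `φ t` within `δ` of `0` are relatively dense. With `δ = ε / 2`, such a `t` lies
within `ε / 2` of a multiple `n * α r` for every `r`, and since `α r > 1 + 2ε` the next multiple
lies beyond `t + 3ε/2 + 1`, so `[t + ε/2, t + 3ε/2 + 1]` misses `𝒜`. Picking one such interval
in each of `≍ P` consecutive windows of bounded length in `[0, P]` gives the disjoint family.
-/

open Set Filter Topology Metric Function

def IsRelativelyDense (s : Set ℝ) : Prop :=
  ∃ M : ℝ, ∀ a : ℝ, ∃ t ∈ s, |t - a| ≤ M

theorem IsRelativelyDense.of_add_mem {s t : Set ℝ} (hs : IsRelativelyDense s) {b : ℝ}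
    (hst : ∀ x ∈ s, x + b ∈ t) : IsRelativelyDense t := by
  obtain ⟨M, hM⟩ := hs
  refine ⟨M, fun a => ?_⟩
  obtain ⟨x, hx, hxa⟩ := hM (a - b)
  exact ⟨x + b, hst x hx, by rwa [sub_sub_eq_add_sub] at hxa⟩

theorem isRelativelyDense_setOf_norm_lt {G : Type*} [SeminormedAddCommGroup G] [CompactSpace G]
    (φ : ℝ →+ G) {δ : ℝ} (hδ : 0 < δ) : IsRelativelyDense {t | ‖φ t‖ < δ} := by
  have hφ : TotallyBounded (φ '' univ) := isCompact_univ.totallyBounded.subset (subset_univ _)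
  obtain ⟨F, -, hF, hcover⟩ := exists_subset_image_finite_and.1 <|
    finite_approx_of_totallyBounded hφ δ hδ
  obtain ⟨M, hM⟩ := hF.isBounded.subset_closedBall 0
  refine ⟨M, fun a => ?_⟩
  obtain ⟨_, ⟨s, hsF, rfl⟩, hs⟩ : ∃ y ∈ φ '' F, -φ a ∈ ball y δ := by
    simpa using hcover (mem_image_of_mem φ (mem_univ (-a)))
  refine ⟨a + s, ?_, ?_⟩
  · rwa [mem_ofPred_eq, map_add, add_comm, ← sub_neg_eq_add, ← dist_eq_norm, dist_comm]
  · simpa using hM hsF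

theorem int_mul_notMem_Icc_of_abs_sub_lt {α t ε : ℝ} {n : ℤ} (hα : 1 + 2 * ε < α)
    (hn : |t - n * α| < ε / 2) (m : ℤ) : (m : ℝ) * α ∉ Icc (t + ε / 2) (t + ε / 2 + (1 + ε)) := by
  rintro ⟨hlow, hupp⟩
  obtain ⟨hn₁, hn₂⟩ := abs_lt.1 hn
  have hα₀ : 0 < α := by linarith [(abs_nonneg _).trans_lt hn]
  have hnm : n < m := by
    exact_mod_cast lt_of_mul_lt_mul_right (by linarith : (n : ℝ) * α < m * α) hα₀.le
  have hmn : m < n + 1 := by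
    exact_mod_cast lt_of_mul_lt_mul_right (by linarith : (m : ℝ) * α < (n + 1) * α) hα₀.le
  omega

theorem exists_disjoint_Icc_of_isRelativelyDense {U : Set ℝ} {L : ℝ} (hL : 0 ≤ L)
    (hU : IsRelativelyDense {x | Icc x (x + L) ⊆ U}) :
    ∃ d : ℝ, 0 < d ∧ ∃ P₀ : ℝ, ∀ P : ℝ, P₀ ≤ P →
      ∃ (N : ℕ) (a : Fin N → ℝ), d * P ≤ N ∧
        (∀ j, Icc (a j) (a j + L) ⊆ Icc 0 P) ∧
        Pairwise (Disjoint on fun j => Icc (a j) (a j + L)) ∧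
        ∀ j, Icc (a j) (a j + L) ⊆ U := by
  obtain ⟨M, hM⟩ := hU
  choose x hxU hxM using hM
  have hM₀ : 0 ≤ M := (abs_nonneg _).trans (hxM 0)
  set W := 2 * M + L + 1
  have hW : 0 < W := by positivity
  have hwindow (j : ℕ) : Icc (x (j * W + M)) (x (j * W + M) + L) ⊆ Ico (j * W) (j * W + W) := by
    obtain ⟨h₁, h₂⟩ := abs_le.1 (hxM (j * W + M))
    exact Icc_subset_Ico (by linarith) (by linarith)
  refine ⟨1 / (2 * W), by positivity, 2 * W, fun P hP => ?_⟩
  have hN : (⌊P / W⌋₊ : ℝ) * W ≤ P :=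
    (le_div_iff₀ hW).1 (Nat.floor_le (div_nonneg (by linarith) hW.le))
  refine ⟨⌊P / W⌋₊, fun j => x (j * W + M), ?_, fun j => ?_, fun j k hjk => ?_, fun j => hxU _⟩
  · have h₁ : 1 ≤ P / (2 * W) := (one_le_div (by positivity)).2 hP
    calc 1 / (2 * W) * P = P / W - P / (2 * W) := by field_simp; ring
      _ ≤ P / W - 1 := by linarith
      _ ≤ ⌊P / W⌋₊ := (Nat.sub_one_lt_floor _).le
  · have hj : ((j : ℕ) : ℝ) + 1 ≤ ⌊P / W⌋₊ := by exact_mod_cast j.2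
    refine (hwindow j).trans (Ico_subset_Icc_self.trans (Icc_subset_Icc (by positivity) ?_))
    nlinarith
  · have hjk' : ((j : ℕ) : ℤ) ≠ (k : ℕ) := by exact_mod_cast Fin.val_injective.ne hjk
    refine (Disjoint.mono (hwindow j) (hwindow k)) ?_
    simpa [onFun, add_mul, zsmul_eq_mul] using pairwise_disjoint_Ico_add_zsmul (0 : ℝ) W hjk'

/-- For reals `α r > 1`, there exist `ε₁ ∈ (0,1)` and `d > 0` such that for all
sufficiently large `P` there are at least `d * P` pairwise disjoint closed intervals
of length `1 + ε₁` contained in `[0, P]`, each disjoint from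
`𝒜 = {m * α r : m positive integer}`. -/
theorem stmt5 (R : ℕ) (α : Fin R → ℝ) (hα : ∀ r, 1 < α r) :
    ∃ ε₁ : ℝ, 0 < ε₁ ∧ ε₁ < 1 ∧ ∃ d : ℝ, 0 < d ∧ ∃ P₀ : ℝ, ∀ P : ℝ, P₀ ≤ P →
      ∃ (N : ℕ) (a : Fin N → ℝ),
        d * P ≤ N ∧
        (∀ j, Set.Icc (a j) (a j + 1 + ε₁) ⊆ Set.Icc 0 P) ∧
        (∀ j k, j ≠ k →
          Disjoint (Set.Icc (a j) (a j + 1 + ε₁)) (Set.Icc (a k) (a k + 1 + ε₁))) ∧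
        (∀ j, ∀ y ∈ Set.Icc (a j) (a j + 1 + ε₁),
          ¬ ∃ (m : ℕ) (r : Fin R), 0 < m ∧ y = m * α r) := by
  obtain ⟨ε, ⟨hε₁, hεα⟩, hε₀⟩ : ∃ ε : ℝ, (ε < 1 ∧ ∀ r, 1 + 2 * ε < α r) ∧ 0 < ε := by
    have hsmall : ∀ᶠ ε in 𝓝 (0 : ℝ), ε < 1 ∧ ∀ r, 1 + 2 * ε < α r :=
      (eventually_lt_nhds one_pos).and <| eventually_all.2 fun r =>
        (eventually_lt_nhds (by linarith [hα r] : (0 : ℝ) < (α r - 1) / 2)).mono fun ε hε => by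
          linarith
    exact ((hsmall.filter_mono nhdsWithin_le_nhds).and self_mem_nhdsWithin).exists
      (f := 𝓝[>] (0 : ℝ))
  have (r : Fin R) : Fact (0 < α r) := ⟨by linarith [hα r]⟩
  let φ : ℝ →+ ((r : Fin R) → AddCircle (α r)) :=
    AddMonoidHom.pi fun r => QuotientAddGroup.mk' (AddSubgroup.zmultiples (α r))
  have hgood : IsRelativelyDense {x | Icc x (x + (1 + ε)) ⊆ {y | ∀ r, ∀ m : ℤ, y ≠ m * α r}} :=
    (isRelativelyDense_setOf_norm_lt φ (half_pos hε₀)).of_add_mem fun t ht y hy r m hym =>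
      int_mul_notMem_Icc_of_abs_sub_lt (hεα r)
        (by rw [← AddCircle.norm_eq]; exact (norm_le_pi_norm (φ t) r).trans_lt ht) m (hym ▸ hy)
  obtain ⟨d, hd, P₀, hP⟩ := exists_disjoint_Icc_of_isRelativelyDense (by positivity) hgood
  refine ⟨ε, hε₀, hε₁, d, hd, P₀, fun P hP₀ => ?_⟩
  obtain ⟨N, a, hN, hsub, hdisj, hU⟩ := hP P hP₀
  simp_rw [add_assoc]
  exact ⟨N, a, hN, hsub, fun j k hjk => hdisj hjk, fun j y hy ⟨m, r, _, hym⟩ =>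
    hU j hy r m (by exact_mod_cast hym)⟩
end

section
/- Let ε₁ > 0 and P > 0, and let (u_p)_{p≥1} be a sequence of real numbers with u₁ ≥ 1 and u_{p+1} ≥ u_p + 1 for all p ≥ 1. Suppose I₁, …, I_N are pairwise disjoint closed intervals, each of length 1 + ε₁, contained in [0, P], and such that no I_j contains any term of the sequence (u_p)_{p≥1}. Then the number of indices p with u_p ≤ P is at most P − N·ε₁. -/
/-!
Each index `p ≥ 1` with `u p ≤ P` owns the unit interval `(u p - 1, u p]`, and each `I_j` owns the
initial piece `[a_j, a_j + ε₁]` of length `ε₁`. The unit intervals are disjoint because the gaps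
of `u` are at least `1`, and `[a_j, a_j + ε₁]` cannot meet `(u p - 1, u p]` since otherwise `u p`
would lie in `I_j`. All these pieces fit in `[0, P]`, so comparing Lebesgue measures gives
`#{p} + N ε₁ ≤ P`.
-/

open MeasureTheory Set Function

section GapSequence

variable {u : ℕ → ℝ} (hgap : ∀ p, 1 ≤ p → u p + 1 ≤ u (p + 1))
include hgap

theorem add_one_le_of_gap {p q : ℕ} (hp : 1 ≤ p) (hpq : p < q) : u p + 1 ≤ u q := by
  induction q, hpq using Nat.le_induction with
  | base => exact hgap p hp
  | succ q hpq ih => linarith [hgap q (by omega)]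

theorem one_le_of_gap (hu1 : 1 ≤ u 1) {p : ℕ} (hp : 1 ≤ p) : 1 ≤ u p := by
  rcases hp.eq_or_lt with rfl | hp
  · exact hu1
  · linarith [add_one_le_of_gap hgap le_rfl hp]

theorem pairwiseDisjoint_Ioc_of_gap :
    {p : ℕ | 1 ≤ p}.PairwiseDisjoint fun p => Ioc (u p - 1) (u p) := by
  intro p hp q hq hpq
  rcases hpq.lt_or_gt with h | h
  · exact Ioc_disjoint_Ioc_of_le (by linarith [add_one_le_of_gap hgap hp h])
  · exact (Ioc_disjoint_Ioc_of_le (by linarith [add_one_le_of_gap hgap hq h])).symm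

theorem volume_biUnion_Ioc_of_gap (S : Finset ℕ) (hS : ∀ p ∈ S, 1 ≤ p) :
    volume (⋃ p ∈ S, Ioc (u p - 1) (u p)) = S.card := by
  rw [measure_biUnion_finset ((pairwiseDisjoint_Ioc_of_gap hgap).subset hS)
    fun _ _ => measurableSet_Ioc]
  simp [Real.volume_Ioc]

end GapSequence

theorem volume_iUnion_Icc {ι : Type*} [Fintype ι] {ε : ℝ} (a : ι → ℝ)
    (hdisj : Pairwise (Disjoint on fun j => Icc (a j) (a j + ε))) :
    volume (⋃ j, Icc (a j) (a j + ε)) = Fintype.card ι * ENNReal.ofReal ε := by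
  rw [measure_iUnion hdisj fun _ => measurableSet_Icc, tsum_fintype]
  simp [Real.volume_Icc]

theorem disjoint_Icc_Ioc_of_notMem {a ε x : ℝ} (hx : x ∉ Icc a (a + 1 + ε)) :
    Disjoint (Icc a (a + ε)) (Ioc (x - 1) x) := by
  rw [Set.disjoint_left]
  rintro y ⟨hay, hya⟩ ⟨hxy, hyx⟩
  exact hx ⟨hay.trans hyx, by linarith⟩

theorem card_add_mul_le_of_avoid {ε P : ℝ} (hε : 0 ≤ ε) (hP : 0 ≤ P)
    {u : ℕ → ℝ} (hu1 : 1 ≤ u 1) (hgap : ∀ p, 1 ≤ p → u p + 1 ≤ u (p + 1))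
    {N : ℕ} {a : Fin N → ℝ}
    (hsub : ∀ j, Icc (a j) (a j + 1 + ε) ⊆ Icc 0 P)
    (hdisj : ∀ j k, j ≠ k → Disjoint (Icc (a j) (a j + 1 + ε)) (Icc (a k) (a k + 1 + ε)))
    (havoid : ∀ j, ∀ p, 1 ≤ p → u p ∉ Icc (a j) (a j + 1 + ε))
    (S : Finset ℕ) (hS : ∀ p ∈ S, 1 ≤ p ∧ u p ≤ P) :
    S.card + N * ε ≤ P := by
  set A := ⋃ p ∈ S, Ioc (u p - 1) (u p)
  set B := ⋃ j, Icc (a j) (a j + ε)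
  have hshrink : ∀ j, Icc (a j) (a j + ε) ⊆ Icc (a j) (a j + 1 + ε) := fun j =>
    Icc_subset_Icc_right (by linarith)
  have hA : volume A = S.card := volume_biUnion_Ioc_of_gap hgap S fun p hp => (hS p hp).1
  have hB : volume B = N * ENNReal.ofReal ε := by
    simpa using volume_iUnion_Icc a fun j k hjk => (hdisj j k hjk).mono (hshrink j) (hshrink k)
  have hAB : Disjoint A B := by
    simp only [A, B, disjoint_iUnion_left, disjoint_iUnion_right]
    exact fun j p hp => (disjoint_Icc_Ioc_of_notMem (havoid j p (hS p hp).1)).symm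
  have hAB_sub : A ∪ B ⊆ Icc 0 P := by
    refine union_subset (iUnion₂_subset fun p hp => ?_) (iUnion_subset fun j => ?_)
    · have := one_le_of_gap hgap hu1 (hS p hp).1
      exact Ioc_subset_Icc_self.trans (Icc_subset_Icc (by linarith) (hS p hp).2)
    · exact (hshrink j).trans (hsub j)
  have hvol := measure_mono (μ := volume) hAB_sub
  rwa [measure_union hAB (MeasurableSet.iUnion fun _ => measurableSet_Icc), hA, hB,
    Real.volume_Icc, sub_zero, ← ENNReal.ofReal_natCast, ← ENNReal.ofReal_natCast N,
    ← ENNReal.ofReal_mul (by positivity), ← ENNReal.ofReal_add (by positivity) (by positivity),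
    ENNReal.ofReal_le_ofReal_iff hP] at hvol

/-- Counting lemma: if `u 1 ≥ 1`, the gaps of `u` are at least `1`, and
`I₁, …, I_N` are pairwise disjoint closed intervals of length `1 + ε₁` contained in
`[0, P]`, none containing any term `u p` (`p ≥ 1`), then the number of indices `p ≥ 1`
with `u p ≤ P` is at most `P - N * ε₁`. -/
theorem stmt6 (ε₁ P : ℝ) (hε₁ : 0 < ε₁) (hP : 0 < P)
    (u : ℕ → ℝ) (hu1 : 1 ≤ u 1) (hgap : ∀ p, 1 ≤ p → u p + 1 ≤ u (p + 1))
    (N : ℕ) (a : Fin N → ℝ)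
    (hsub : ∀ j, Set.Icc (a j) (a j + 1 + ε₁) ⊆ Set.Icc 0 P)
    (hdisj : ∀ j k, j ≠ k →
      Disjoint (Set.Icc (a j) (a j + 1 + ε₁)) (Set.Icc (a k) (a k + 1 + ε₁)))
    (havoid : ∀ j, ∀ p, 1 ≤ p → u p ∉ Set.Icc (a j) (a j + 1 + ε₁)) :
    (Nat.card {p : ℕ | 1 ≤ p ∧ u p ≤ P} : ℝ) ≤ P - N * ε₁ := by
  have hpack := card_add_mul_le_of_avoid hε₁.le hP.le hu1 hgap hsub hdisj havoid
  by_cases hfin : {p : ℕ | 1 ≤ p ∧ u p ≤ P}.Finite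
  · rw [Nat.card_eq_card_finite_toFinset hfin, le_sub_iff_add_le]
    exact hpack _ fun p hp => hfin.mem_toFinset.1 hp
  · rw [Set.Infinite.card_eq_zero hfin, Nat.cast_zero, sub_nonneg]
    simpa using hpack ∅ (by simp)
end

section
/- Let α₁, …, α_R be real numbers, each strictly larger than 1, and let 𝒜 = {m·α_r : m a positive integer, r ∈ {1,…,R}}. Then there is no sequence (u_p)_{p≥1} of positive real numbers satisfying simultaneously: u₁ ≥ 1; u_{p+1} ≥ u_p + 1 for all p ≥ 1; u_p ∈ 𝒜 for every p ≥ 1; and u_p/p → 1 as p → ∞. -/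
/-!
Since `u p / p → 1`, there are arbitrarily long windows `u P, …, u (P + L)` over which the
sequence grows by at most `L + ε`; as the gaps are at least `1`, this puts `u (P + j)` in
`[x + j, x + j + ε]` with `x = u P`. If two indices `i ≠ j` of the window use the same
`α`, then `(m_j - m_i) α` lies within `ε` of the integer `j - i` with `|m_j - m_i| ≤ L`, and
once `ε` is below every nonzero distance from `k α_r` (`|k| ≤ L`) to `ℤ`, this makes `α`
rational.
The rational `α = a / b` only produce points of `B⁻¹ ℤ`, `B = ∏ b`, so for `ε < B⁻¹` all
their offsets `u (P + j) - j` equal one rational `y = G / g`. Then `y + j ∈ α ℤ` forces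
`g ∣ b` and `a ∣ G + g j`, so `g` is coprime to those `a`, and the residue class of `j`
where `G + g j ≡ 1` modulo their product avoids every rational `α`. In a long enough window
this class has `R + 1` members, whose `α` are irrational and pairwise distinct: impossible.
-/

open Filter Topology Set

lemma Rat.den_dvd_den_and_num_dvd_of_add_intCast_eq {y q : ℚ} {j m : ℤ} (h : y + j = m * q) :
    y.den ∣ q.den ∧ q.num ∣ y.num + y.den * j := by
  have key : (y.num + y.den * j) * q.den = m * q.num * y.den := by
    have : ((y.num + y.den * j) * q.den : ℚ) = m * q.num * y.den := by
      calc ((y.num + y.den * j) * q.den : ℚ) = (y + j) * y.den * q.den := by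
            rw [← Rat.mul_den_eq_num]; ring
        _ = m * (q * q.den) * y.den := by rw [h]; ring
        _ = m * q.num * y.den := by rw [Rat.mul_den_eq_num]
    exact_mod_cast this
  have hcop : IsCoprime (y.num + y.den * j) y.den := y.isCoprime_num_den.add_mul_left_left j
  refine ⟨Int.natCast_dvd_natCast.1 (hcop.symm.dvd_of_dvd_mul_left ?_),
    q.isCoprime_num_den.dvd_of_dvd_mul_right ?_⟩
  · exact key ▸ dvd_mul_left _ _
  · exact key ▸ (dvd_mul_left _ _).mul_right _

lemma Rat.one_lt_natAbs_num_of_one_lt {q : ℚ} (hq : 1 < q) : 1 < q.num.natAbs := by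
  have : (q.den : ℚ) < q.num := by
    rw [← q.mul_den_eq_num]
    exact lt_mul_of_one_lt_left (by exact_mod_cast q.den_pos) hq
  have : (q.den : ℤ) < q.num := by exact_mod_cast this
  have := q.den_pos
  omega

theorem exists_injective_add_ne_intCast_mul (Q : Finset ℚ) (hQ : ∀ q ∈ Q, 1 < q.num.natAbs)
    (y : ℚ) (n : ℕ) :
    ∃ j : Fin n → ℕ, Function.Injective j ∧ (∀ s, j s < n * ∏ q ∈ Q, q.num.natAbs) ∧
      ∀ s, ∀ q ∈ Q, ∀ m : ℤ, y + j s ≠ m * q := by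
  set S := Q.filter (fun q => y.den ∣ q.den)
  set M := ∏ q ∈ S, q.num.natAbs
  have hQ₀ : ∀ q ∈ Q, q.num.natAbs ≠ 0 := fun q hq => by have := hQ q hq; omega
  have hM : M ≠ 0 := Finset.prod_ne_zero_iff.2 fun q hq => hQ₀ q (Finset.mem_filter.1 hq).1
  have hMQ : M ≤ ∏ q ∈ Q, q.num.natAbs :=
    Nat.le_of_dvd (Nat.pos_of_ne_zero (Finset.prod_ne_zero_iff.2 hQ₀))
      (Finset.prod_dvd_prod_of_subset _ _ _ (Finset.filter_subset _ _))
  have hcop : y.den.Coprime M := Nat.Coprime.prod_right fun q hq =>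
    Nat.Coprime.coprime_dvd_left (Finset.mem_filter.1 hq).2 q.reduced.symm
  have : NeZero M := ⟨hM⟩
  -- `c` solves `y.num + y.den * c = 1` in `ZMod M`
  set c : ZMod M := (1 - y.num) * (y.den : ZMod M)⁻¹
  refine ⟨fun s => c.val + s * M, fun s t hst => ?_, fun s => ?_, fun s q hq m h => ?_⟩
  · exact Fin.ext (Nat.eq_of_mul_eq_mul_right (Nat.pos_of_ne_zero hM) (by simpa using hst))
  · calc c.val + s * M < (s + 1) * M := by have := c.val_lt; linarith
      _ ≤ n * ∏ q ∈ Q, q.num.natAbs := Nat.mul_le_mul s.2 hMQ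
  · obtain ⟨hden, hnum⟩ := Rat.den_dvd_den_and_num_dvd_of_add_intCast_eq (by exact_mod_cast h)
    have hM1 : (M : ℤ) ∣ y.num + y.den * (c.val + s * M : ℕ) - 1 := by
      rw [← ZMod.intCast_zmod_eq_zero_iff_dvd]
      push_cast
      rw [ZMod.natCast_zmod_val, ZMod.natCast_self, mul_zero, add_zero, mul_left_comm,
        ZMod.coe_mul_inv_eq_one _ hcop]
      ring
    have hqM : q.num ∣ M := Int.natAbs_dvd.1 (Int.natCast_dvd_natCast.2
      (Finset.dvd_prod_of_mem _ (Finset.mem_filter.2 ⟨hq, hden⟩)))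
    have h1 : q.num.natAbs ∣ 1 := by
      simpa using Int.natAbs_dvd_natAbs.2 (dvd_sub hnum (hqM.trans hM1))
    exact (hQ q hq).ne' (Nat.dvd_one.1 h1)

lemma eventually_forall_abs_sub_intCast_le_imp_eq (x : ℝ) :
    ∀ᶠ δ in 𝓝[>] (0 : ℝ), ∀ z : ℤ, |x - z| ≤ δ → x = z := by
  have h : ∀ᶠ δ in 𝓝 (0 : ℝ), δ < |x - round x| ∨ x = round x := by
    rcases eq_or_ne x (round x) with hx | hx
    · exact .of_forall fun _ => .inr hx
    · exact (eventually_lt_nhds (abs_pos.2 (sub_ne_zero.2 hx))).mono fun _ => .inl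
  filter_upwards [nhdsWithin_le_nhds (h.and (eventually_lt_nhds one_half_pos))]
    with δ ⟨hδ, hδ₂⟩ z hz
  obtain ⟨hz₁, hz₂⟩ := abs_le.1 hz
  have hround : round x = z := round_eq_iff.2 ⟨by linarith, by linarith⟩
  rw [hround] at hδ
  exact hδ.resolve_left hz.not_gt

lemma not_irrational_of_mul_mem_Icc {a x ε : ℝ} {L i j : ℕ} {m n : ℤ} (ha : 1 ≤ a)
    (hε : ε < 1)
    (hsep : ∀ k : ℤ, |k| ≤ L → ∀ z : ℤ, |k * a - z| ≤ ε → k * a = z)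
    (hi : i ≤ L) (hj : j ≤ L) (hij : i ≠ j)
    (hm : m * a ∈ Icc (x + i) (x + i + ε)) (hn : n * a ∈ Icc (x + j) (x + j + ε)) :
    ¬ Irrational a := by
  have hclose : |(n - m : ℤ) * a - (j - i : ℤ)| ≤ ε := by
    push_cast
    rw [abs_le]
    constructor <;> linarith [hm.1, hm.2, hn.1, hn.2]
  have hji : |((j - i : ℤ) : ℝ)| ≤ L := by
    have := (Nat.cast_le (α := ℝ)).2 hi
    have := (Nat.cast_le (α := ℝ)).2 hj
    push_cast
    rw [abs_le]
    constructor <;> linarith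
  have hk : |n - m| ≤ (L : ℤ) := by
    have : ((|n - m| : ℤ) : ℝ) < L + 1 := by
      calc ((|n - m| : ℤ) : ℝ) = |((n - m : ℤ) : ℝ)| := Int.cast_abs
        _ ≤ |((n - m : ℤ) : ℝ)| * a := le_mul_of_one_le_right (abs_nonneg _) ha
        _ = |(n - m : ℤ) * a| := by rw [abs_mul, abs_of_pos (by linarith : 0 < a)]
        _ ≤ ε + L := by
          linarith [abs_sub_abs_le_abs_sub ((n - m : ℤ) * a) ((j - i : ℤ) : ℝ)]
        _ < L + 1 := by linarith
    exact Int.lt_add_one_iff.1 (by exact_mod_cast this)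
  have hint := hsep _ hk _ hclose
  have hnm : n - m ≠ 0 := by
    rintro h
    rw [h, Int.cast_zero, zero_mul, eq_comm, Int.cast_eq_zero, sub_eq_zero] at hint
    exact hij (by exact_mod_cast hint.symm)
  exact fun hirr => (hirr.intCast_mul hnm).ne_int _ hint

lemma Set.subsingleton_setOf_mul_eq_intCast_mem_Icc {B x ε : ℝ} (hB : 0 < B) (hε : B * ε < 1) :
    {v : ℝ | (∃ z : ℤ, B * v = z) ∧ v ∈ Icc x (x + ε)}.Subsingleton := by
  rintro v ⟨⟨z, hz⟩, hv⟩ w ⟨⟨z', hz'⟩, hw⟩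
  have hzz : z = z' := by
    rw [← sub_eq_zero, ← Int.abs_lt_one_iff, ← Int.cast_lt (R := ℝ)]
    push_cast
    rw [← hz, ← hz', ← mul_sub, abs_mul, abs_of_pos hB]
    calc B * |v - w| ≤ B * ε := by
          gcongr; rw [abs_le]; constructor <;> linarith [hv.1, hv.2, hw.1, hw.2]
      _ < 1 := hε
  rw [hzz, ← hz'] at hz
  exact mul_left_cancel₀ hB.ne' hz

lemma add_natCast_le_of_add_one_le {u : ℕ → ℝ} {p : ℕ}
    (hu : ∀ q, p ≤ q → u q + 1 ≤ u (q + 1)) (k : ℕ) : u p + k ≤ u (p + k) := by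
  induction k with
  | zero => simp
  | succ k ih =>
    push_cast
    linarith [hu (p + k) (by omega), show u (p + (k + 1)) = u (p + k + 1) from rfl]

lemma exists_ge_apply_add_le_of_tendsto_div {u : ℕ → ℝ}
    (hu : Tendsto (fun p : ℕ => u p / p) atTop (𝓝 1)) (L : ℕ) {ε : ℝ} (hε : 0 < ε) (P₀ : ℕ) :
    ∃ P ≥ P₀, u (P + L) ≤ u P + L + ε := by
  by_contra! h
  rcases L.eq_zero_or_pos with rfl | hL
  · have := h P₀ le_rfl
    simp at this
    linarith
  have hlow : ∀ n : ℕ, u P₀ + n * (L + ε) ≤ u (P₀ + n * L) := by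
    intro n
    induction n with
    | zero => simp
    | succ n ih =>
      have := h (P₀ + n * L) (by omega)
      rw [add_mul, one_mul, ← add_assoc]
      push_cast
      linarith
  have hidx : Tendsto (fun n : ℕ => P₀ + n * L) atTop atTop :=
    tendsto_atTop_mono (fun n => le_add_left (Nat.le_mul_of_pos_right n hL)) tendsto_id
  have hupper := hu.comp hidx
  have hlower := tendsto_add_mul_div_add_mul_atTop_nhds (u P₀) (P₀ : ℝ) ((L : ℝ) + ε)
    (Nat.cast_ne_zero.2 hL.ne')
  have := le_of_tendsto_of_tendsto hlower hupper <| eventually_atTop.2 ⟨1, fun n hn => by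
    rw [Function.comp_apply, show ((P₀ + n * L : ℕ) : ℝ) = P₀ + L * n by push_cast; ring]
    exact div_le_div_of_nonneg_right (by linarith [hlow n]) (by positivity)⟩
  rw [div_le_one (by positivity)] at this
  linarith

lemma apply_add_mem_Icc_of_add_one_le {u : ℕ → ℝ} {P L j : ℕ} {ε : ℝ}
    (hu : ∀ q, P ≤ q → u q + 1 ≤ u (q + 1)) (hPL : u (P + L) ≤ u P + L + ε)
    (hj : j ≤ L) : u (P + j) ∈ Icc (u P + j) (u P + j + ε) := by
  refine ⟨add_natCast_le_of_add_one_le hu j, ?_⟩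
  have := add_natCast_le_of_add_one_le (p := P + j) (fun q hq => hu q (by omega)) (L - j)
  rw [add_assoc, Nat.add_sub_cancel' hj, Nat.cast_sub hj] at this
  linarith

section

variable {ι : Type*} [Fintype ι]

theorem false_of_forall_mul_mem_Icc (α : ι → ℝ) (hα : ∀ r, 1 ≤ α r) (Q : Finset ℚ)
    (hQ : ∀ q ∈ Q, 1 < q.num.natAbs) (hαQ : ∀ r (q : ℚ), α r = q → q ∈ Q)
    {L : ℕ} (hL : (Fintype.card ι + 1) * ∏ q ∈ Q, q.num.natAbs ≤ L) {ε : ℝ}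
    (hsep : ∀ k : ℤ, |k| ≤ L → ∀ r, ∀ z : ℤ, |k * α r - z| ≤ ε → k * α r = z)
    (hε : ((∏ q ∈ Q, q.den : ℕ) : ℝ) * ε < 1) (x : ℝ) (m : Fin (L + 1) → ℤ)
    (r : Fin (L + 1) → ι)
    (hm : ∀ j : Fin (L + 1), m j * α (r j) ∈ Icc (x + (j : ℕ)) (x + (j : ℕ) + ε)) :
    False := by
  set B := ∏ q ∈ Q, q.den
  have hB : (1 : ℝ) ≤ B := Nat.one_le_cast.2 (Finset.prod_pos fun (q : ℚ) _ => q.den_pos)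
  have hε1 : ε < 1 := by nlinarith
  have hpair : ∀ i j, i ≠ j → r i = r j → ¬ Irrational (α (r j)) := fun i j hij hr =>
    not_irrational_of_mul_mem_Icc (hα _) hε1 (fun k hk => hsep k hk _) (Fin.is_le i)
      (Fin.is_le j) (Fin.val_ne_of_ne hij) (hr ▸ hm i) (hm j)
  have hmem : ∀ j (q : ℚ), α (r j) = q →
      ((m j * q - (j : ℕ) : ℚ) : ℝ) ∈
        {v : ℝ | (∃ z : ℤ, B * v = z) ∧ v ∈ Icc x (x + ε)} := by
    intro j q hq
    obtain ⟨c, hc⟩ := Finset.dvd_prod_of_mem Rat.den (hαQ _ _ hq)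
    refine ⟨⟨m j * q.num * c - B * (j : ℕ), ?_⟩, ?_⟩
    · have h : (B : ℚ) * (m j * q - (j : ℕ)) = (m j * q.num * c - B * (j : ℕ) : ℤ) := by
        rw [show B = q.den * c from hc]
        push_cast
        rw [← q.mul_den_eq_num]
        ring
      exact_mod_cast h
    · push_cast
      rw [← hq]
      exact ⟨by linarith [(hm j).1], by linarith [(hm j).2]⟩
  obtain ⟨y, hy⟩ :
      ∃ y : ℚ, ∀ (j : Fin (L + 1)) (q : ℚ), α (r j) = q → m j * q - (j : ℕ) = y := by
    by_cases h : ∃ (j : Fin (L + 1)) (q : ℚ), α (r j) = q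
    · obtain ⟨j₀, q₀, hq₀⟩ := h
      refine ⟨m j₀ * q₀ - (j₀ : ℕ), fun j q hq => ?_⟩
      exact_mod_cast Set.subsingleton_setOf_mul_eq_intCast_mem_Icc (by positivity) hε
        (hmem j q hq) (hmem j₀ q₀ hq₀)
    · exact ⟨0, fun j q hq => (h ⟨j, q, hq⟩).elim⟩
  obtain ⟨J, hJinj, hJlt, hJy⟩ :=
    exists_injective_add_ne_intCast_mul Q hQ y (Fintype.card ι + 1)
  let j : Fin (Fintype.card ι + 1) → Fin (L + 1) := fun s => ⟨J s, by have := hJlt s; omega⟩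
  have hirr : ∀ s, Irrational (α (r (j s))) := fun s ⟨q, hq⟩ =>
    hJy s q (hαQ _ _ hq.symm) (m (j s)) (by rw [← hy _ q hq.symm]; ring)
  have hinj : Function.Injective (r ∘ j) := fun s t hst => by
    by_contra hne
    exact hpair _ _ (fun h => hne (hJinj (congrArg Fin.val h))) hst (hirr t)
  simpa using Fintype.card_le_of_injective _ hinj

theorem exists_forall_not_forall_mul_mem_Icc (α : ι → ℝ) (hα : ∀ r, 1 < α r) :
    ∃ L : ℕ, ∃ ε > 0, ∀ x : ℝ,
      ¬ ∀ j ≤ L, ∃ (m : ℤ) (r : ι), m * α r ∈ Icc (x + j) (x + j + ε) := by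
  set Q : Finset ℚ := ((Set.finite_range α).preimage Rat.cast_injective.injOn).toFinset
  have hαQ : ∀ r (q : ℚ), α r = q → q ∈ Q := fun r q h => by simp [Q, h.symm]
  have hQ : ∀ q ∈ Q, 1 < q.num.natAbs := fun q hq => by
    obtain ⟨r, hr⟩ : ∃ r, α r = q := by simpa [Q] using hq
    exact Rat.one_lt_natAbs_num_of_one_lt (by exact_mod_cast hr ▸ hα r)
  set L := (Fintype.card ι + 1) * ∏ q ∈ Q, q.num.natAbs
  have hsep_eventually : ∀ᶠ ε in 𝓝[>] (0 : ℝ), ∀ k ∈ Finset.Icc (-(L : ℤ)) L, ∀ r, ∀ z : ℤ,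
      |k * α r - z| ≤ ε → k * α r = z :=
    (Filter.eventually_all_finset _).2 fun k _ =>
      eventually_all.2 fun r => eventually_forall_abs_sub_intCast_le_imp_eq _
  have hB_eventually : ∀ᶠ ε in 𝓝[>] (0 : ℝ), ((∏ q ∈ Q, q.den : ℕ) : ℝ) * ε < 1 :=
    ((tendsto_id.const_mul _).mono_left nhdsWithin_le_nhds).eventually_lt_const (by simp)
  obtain ⟨ε, ⟨hsep, hB⟩, hε⟩ := ((hsep_eventually.and hB_eventually).and self_mem_nhdsWithin).exists
  refine ⟨L, ε, hε, fun x h => ?_⟩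
  choose m r hm using fun j : Fin (L + 1) => h j j.is_le
  exact false_of_forall_mul_mem_Icc α (fun r => (hα r).le) Q hQ hαQ le_rfl
    (fun k hk => hsep k (Finset.mem_Icc.2 (abs_le.1 hk))) hB x m r hm

end

/-- There is no sequence of positive reals `u` with `u 1 ≥ 1`, gaps at least `1`,
all values in `𝒜 = {m * α r : m positive integer}` (with all `α r > 1`),
and `u p / p → 1`. -/
theorem stmt7 (R : ℕ) (α : Fin R → ℝ) (hα : ∀ r, 1 < α r) :
    ¬ ∃ u : ℕ → ℝ,
      (∀ p, 1 ≤ p → 0 < u p) ∧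
      1 ≤ u 1 ∧
      (∀ p, 1 ≤ p → u p + 1 ≤ u (p + 1)) ∧
      (∀ p, 1 ≤ p → ∃ (m : ℕ) (r : Fin R), 0 < m ∧ u p = m * α r) ∧
      Filter.Tendsto (fun p : ℕ => u p / p) Filter.atTop (nhds 1) := by
  rintro ⟨u, -, -, hgap, hmem, hlim⟩
  obtain ⟨L, ε, hε, hnot⟩ := exists_forall_not_forall_mul_mem_Icc α hα
  obtain ⟨P, hP, hPL⟩ := exists_ge_apply_add_le_of_tendsto_div hlim L hε 1
  refine hnot (u P) fun j hj => ?_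
  obtain ⟨m, r, -, hm⟩ := hmem (P + j) (by omega)
  refine ⟨m, r, ?_⟩
  rw [Int.cast_natCast, ← hm]
  exact apply_add_mem_Icc_of_add_one_le (fun q hq => hgap q (by omega)) hPL hj
end
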